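/- For positive definite W, Q and real antisymmetric U, T[W] ≤ rank(U) · R, where T[W] = ‖√W Q⁻¹ U Q⁻¹ √W‖₁ / Tr[W Q⁻¹] and R = ‖Q^{-1/2} U Q^{-1/2}‖_∞. -/

import Mathlib

/-! With `s = √(Q⁻¹)`, `w = √W`, `A = w s` and `M = s U s`, the numerator of `T[W]` is the trace
norm of `A M Aᵀ`, the denominator `Tr[W Q⁻¹]` is `‖A‖₂²`, and `R = ‖M‖_∞`. Cauchy–Schwarz on the
singular values gives `‖X‖₁ ≤ √(rank X) ‖X‖₂` and `‖X‖₂ ≤ √(rank X) ‖X‖_∞`; together with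
submultiplicativity of the Frobenius norm and `rank (A M Aᵀ) ≤ rank M ≤ rank U` this yields
`‖A M Aᵀ‖₁ ≤ rank U · ‖M‖_∞ · ‖A‖₂²`. -/

open Matrix

/-- the square root of a psd matrix, as `Matrix.PosSemidef.sqrt` was defined in the older Mathlib -/
noncomputable def psdSqrt {n : ℕ} {A : Matrix (Fin n) (Fin n) ℝ} (hA : A.PosSemidef) :
    Matrix (Fin n) (Fin n) ℝ :=
  (hA.1.eigenvectorUnitary : Matrix (Fin n) (Fin n) ℝ) *
    diagonal ((↑) ∘ (√·) ∘ hA.1.eigenvalues) * (star hA.1.eigenvectorUnitary : Matrix (Fin n) (Fin n) ℝ)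

theorem psdSqrt_isHermitian {n : ℕ} {A : Matrix (Fin n) (Fin n) ℝ} (hA : A.PosSemidef) :
    (psdSqrt hA).IsHermitian := by
  unfold psdSqrt
  rw [show (star hA.1.eigenvectorUnitary : Matrix (Fin n) (Fin n) ℝ) =
    (hA.1.eigenvectorUnitary : Matrix (Fin n) (Fin n) ℝ)ᴴ from rfl]
  exact isHermitian_mul_mul_conjTranspose _ (isHermitian_diagonal_of_self_adjoint _
    (by ext i; simp))

noncomputable def traceNorm {n : ℕ} (A : Matrix (Fin n) (Fin n) ℝ) : ℝ :=
  (psdSqrt (Matrix.posSemidef_conjTranspose_mul_self A)).trace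

noncomputable def singVals {n : ℕ} (A : Matrix (Fin n) (Fin n) ℝ) : Fin n → ℝ :=
  (psdSqrt_isHermitian (Matrix.posSemidef_conjTranspose_mul_self A)).eigenvalues

noncomputable def opNorm {n : ℕ} (A : Matrix (Fin n) (Fin n) ℝ) : ℝ :=
  ⨆ i, singVals A i

/-- the positive semidefinite square root, extended by `0` off psd matrices -/
noncomputable def mySqrt {n : ℕ} (A : Matrix (Fin n) (Fin n) ℝ) : Matrix (Fin n) (Fin n) ℝ :=
  open Classical in
  if h : A.PosSemidef then psdSqrt h else 0

/-- the weight-dependent incompatibility measure `T[W]` -/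
noncomputable def Tmeas {n : ℕ} (W Q U : Matrix (Fin n) (Fin n) ℝ) : ℝ :=
  traceNorm (mySqrt W * Q⁻¹ * U * Q⁻¹ * mySqrt W) / (W * Q⁻¹).trace

/-- the quantumness measure `R` -/
noncomputable def Rmeas {n : ℕ} (Q U : Matrix (Fin n) (Fin n) ℝ) : ℝ :=
  opNorm (mySqrt Q⁻¹ * U * mySqrt Q⁻¹)

attribute [local instance] Matrix.frobeniusNormedAddCommGroup

namespace Matrix

variable {ι : Type*} [Fintype ι]

theorem frobenius_norm_sq_eq_trace {m : Type*} [Fintype m] (A : Matrix m ι ℝ) :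
    ‖A‖ ^ 2 = (Aᴴ * A).trace := by
  rw [frobenius_norm_def, ← Real.sqrt_eq_rpow, Real.sq_sqrt (by positivity), Finset.sum_comm]
  simp [trace, mul_apply, sq]

variable [DecidableEq ι] {A : Matrix ι ι ℝ}

theorem IsHermitian.trace_mul_self_eq_sum_sq (hA : A.IsHermitian) :
    (A * A).trace = ∑ i, hA.eigenvalues i ^ 2 := by
  conv_lhs => rw [hA.spectral_theorem, ← map_mul, Unitary.conjStarAlgAut_apply,
    trace_mul_cycle, Unitary.star_mul_self_of_mem hA.eigenvectorUnitary.2, one_mul]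
  simp [sq]

theorem IsHermitian.sq_trace_le_rank_mul_trace_mul_self (hA : A.IsHermitian) :
    A.trace ^ 2 ≤ A.rank * (A * A).trace := by
  rw [hA.trace_eq_sum_eigenvalues, hA.trace_mul_self_eq_sum_sq, hA.rank_eq_card_non_zero_eigs,
    Fintype.card_subtype]
  set f := hA.eigenvalues
  set s := Finset.univ.filter fun i => f i ≠ 0
  calc (∑ i, (f i : ℝ)) ^ 2 = (∑ i ∈ s, f i) ^ 2 := by rw [Finset.sum_filter_ne_zero]
    _ ≤ (s.card : ℝ) * ∑ i ∈ s, f i ^ 2 := sq_sum_le_card_mul_sum_sq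
    _ ≤ (s.card : ℝ) * ∑ i, f i ^ 2 := by
      gcongr
      exact s.subset_univ

theorem PosSemidef.trace_mul_self_le_rank_mul_sq_iSup_eigenvalues (hA : A.PosSemidef) :
    (A * A).trace ≤ A.rank * (⨆ i, hA.1.eigenvalues i) ^ 2 := by
  rw [hA.1.trace_mul_self_eq_sum_sq, hA.1.rank_eq_card_non_zero_eigs, Fintype.card_subtype]
  set f := hA.1.eigenvalues
  set s := Finset.univ.filter fun i => f i ≠ 0
  calc ∑ i, f i ^ 2 = ∑ i ∈ s, f i ^ 2 := by
        rw [Finset.sum_filter_of_ne fun i _ h => by contrapose! h; simp [h]]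
    _ ≤ s.card • (⨆ i, f i) ^ 2 := by
      refine Finset.sum_le_card_nsmul s _ _ fun i _ => ?_
      gcongr
      · exact hA.eigenvalues_nonneg i
      · exact le_ciSup (Set.finite_range f).bddAbove i
    _ = s.card * (⨆ i, f i) ^ 2 := nsmul_eq_mul _ _

end Matrix

section Sqrt

variable {n : ℕ} {A : Matrix (Fin n) (Fin n) ℝ}

theorem psdSqrt_eq_conjStarAlgAut (hA : A.PosSemidef) :
    psdSqrt hA = Unitary.conjStarAlgAut ℝ _ hA.1.eigenvectorUnitary
      (diagonal (Real.sqrt ∘ hA.1.eigenvalues)) :=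
  rfl

theorem psdSqrt_mul_self (hA : A.PosSemidef) : psdSqrt hA * psdSqrt hA = A := by
  conv_rhs => rw [hA.1.spectral_theorem]
  rw [psdSqrt_eq_conjStarAlgAut, ← map_mul, diagonal_mul_diagonal]
  congr
  funext i
  simp [Real.mul_self_sqrt (hA.eigenvalues_nonneg i)]

theorem psdSqrt_posSemidef (hA : A.PosSemidef) : (psdSqrt hA).PosSemidef := by
  refine (posSemidef_diagonal_iff.mpr fun i => ?_).mul_mul_conjTranspose_same
    (hA.1.eigenvectorUnitary : Matrix (Fin n) (Fin n) ℝ)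
  simp [Real.sqrt_nonneg]

theorem rank_psdSqrt (hA : A.PosSemidef) : (psdSqrt hA).rank = A.rank := by
  rw [← rank_conjTranspose_mul_self, (psdSqrt_isHermitian hA).eq, psdSqrt_mul_self]

theorem mySqrt_mul_self (hA : A.PosSemidef) : mySqrt A * mySqrt A = A := by
  rw [mySqrt, dif_pos hA, psdSqrt_mul_self]

theorem conjTranspose_mySqrt (A : Matrix (Fin n) (Fin n) ℝ) : (mySqrt A)ᴴ = mySqrt A := by
  unfold mySqrt
  split_ifs with hA
  · exact (psdSqrt_isHermitian hA).eq
  · exact conjTranspose_zero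

end Sqrt

section Norms

variable {n : ℕ}

theorem traceNorm_le_sqrt_rank_mul_norm (X : Matrix (Fin n) (Fin n) ℝ) :
    traceNorm X ≤ √X.rank * ‖X‖ := by
  have h := (psdSqrt_isHermitian (posSemidef_conjTranspose_mul_self X))
    |>.sq_trace_le_rank_mul_trace_mul_self
  rw [rank_psdSqrt, rank_conjTranspose_mul_self, psdSqrt_mul_self,
    ← frobenius_norm_sq_eq_trace] at h
  calc traceNorm X ≤ |traceNorm X| := le_abs_self _
    _ ≤ √(X.rank * ‖X‖ ^ 2) := Real.abs_le_sqrt h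
    _ = √X.rank * ‖X‖ := by rw [Real.sqrt_mul (Nat.cast_nonneg _), Real.sqrt_sq (norm_nonneg _)]

theorem opNorm_nonneg (X : Matrix (Fin n) (Fin n) ℝ) : 0 ≤ opNorm X :=
  Real.iSup_nonneg (psdSqrt_posSemidef (posSemidef_conjTranspose_mul_self X)).eigenvalues_nonneg

theorem norm_le_sqrt_rank_mul_opNorm (X : Matrix (Fin n) (Fin n) ℝ) :
    ‖X‖ ≤ √X.rank * opNorm X := by
  have h := (psdSqrt_posSemidef (posSemidef_conjTranspose_mul_self X))
    |>.trace_mul_self_le_rank_mul_sq_iSup_eigenvalues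
  rw [rank_psdSqrt, rank_conjTranspose_mul_self, psdSqrt_mul_self,
    ← frobenius_norm_sq_eq_trace] at h
  calc ‖X‖ = √(‖X‖ ^ 2) := (Real.sqrt_sq (norm_nonneg _)).symm
    _ ≤ √(X.rank * opNorm X ^ 2) := Real.sqrt_le_sqrt h
    _ = √X.rank * opNorm X := by
      rw [Real.sqrt_mul (Nat.cast_nonneg _), Real.sqrt_sq (opNorm_nonneg X)]

theorem traceNorm_mul_mul_conjTranspose_le (A M : Matrix (Fin n) (Fin n) ℝ) :
    traceNorm (A * M * Aᴴ) ≤ M.rank * opNorm M * ‖A‖ ^ 2 := by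
  have hrank : (A * M * Aᴴ).rank ≤ M.rank :=
    (rank_mul_le_left _ _).trans (rank_mul_le_right _ _)
  have hnorm : ‖A * M * Aᴴ‖ ≤ ‖A‖ * ‖M‖ * ‖A‖ := by
    grw [frobenius_norm_mul, frobenius_norm_mul, frobenius_norm_conjTranspose]
  calc traceNorm (A * M * Aᴴ) ≤ √(A * M * Aᴴ).rank * ‖A * M * Aᴴ‖ :=
        traceNorm_le_sqrt_rank_mul_norm _
    _ ≤ √M.rank * (‖A‖ * (√M.rank * opNorm M) * ‖A‖) := by
      grw [hrank, hnorm, norm_le_sqrt_rank_mul_opNorm M]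
    _ = M.rank * opNorm M * ‖A‖ ^ 2 := by
      linear_combination opNorm M * ‖A‖ ^ 2 * Real.mul_self_sqrt (Nat.cast_nonneg M.rank)

theorem traceNorm_div_trace_le_rank_mul_opNorm {w s : Matrix (Fin n) (Fin n) ℝ}
    (hw : wᴴ = w) (hs : sᴴ = s) (U : Matrix (Fin n) (Fin n) ℝ) :
    traceNorm (w * (s * s) * U * (s * s) * w) / (w * w * (s * s)).trace ≤
      U.rank * opNorm (s * U * s) := by
  have hA : (w * s)ᴴ = s * w := by rw [conjTranspose_mul, hw, hs]
  have hnum : w * (s * s) * U * (s * s) * w = (w * s) * (s * U * s) * (w * s)ᴴ := by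
    simp only [hA, mul_assoc]
  have hden : (w * w * (s * s)).trace = ‖w * s‖ ^ 2 := by
    rw [frobenius_norm_sq_eq_trace, hA, ← mul_assoc, trace_mul_comm]
    simp only [mul_assoc]
  have hrank : (s * U * s).rank ≤ U.rank := (rank_mul_le_left _ _).trans (rank_mul_le_right _ _)
  have hR := opNorm_nonneg (s * U * s)
  rw [hnum, hden]
  refine div_le_of_le_mul₀ (sq_nonneg _) (mul_nonneg U.rank.cast_nonneg hR) ?_
  grw [traceNorm_mul_mul_conjTranspose_le, hrank]

end Norms

theorem Tmeas_le_rank_mul_Rmeas_general {n : ℕ} (W Q U : Matrix (Fin n) (Fin n) ℝ)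
    (hW : W.PosDef) (hQ : Q.PosDef) :
    Tmeas W Q U ≤ (U.rank : ℝ) * Rmeas Q U := by
  obtain ⟨s, hs, hss⟩ : ∃ s, mySqrt Q⁻¹ = s ∧ s * s = Q⁻¹ :=
    ⟨_, rfl, mySqrt_mul_self hQ.inv.posSemidef⟩
  obtain ⟨w, hw, hww⟩ : ∃ w, mySqrt W = w ∧ w * w = W := ⟨_, rfl, mySqrt_mul_self hW.posSemidef⟩
  rw [Tmeas, Rmeas, hs, hw, ← hss, ← hww]
  exact traceNorm_div_trace_le_rank_mul_opNorm (hw ▸ conjTranspose_mySqrt W)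
    (hs ▸ conjTranspose_mySqrt Q⁻¹) U

/-- T[W] ≤ rank(U) · R. -/
theorem Tmeas_le_rank_mul_Rmeas {n : ℕ} (W Q U : Matrix (Fin n) (Fin n) ℝ)
    (hW : W.PosDef) (hQ : Q.PosDef) (hU : Uᵀ = -U) :
    Tmeas W Q U ≤ (U.rank : ℝ) * Rmeas Q U :=
  Tmeas_le_rank_mul_Rmeas_general W Q U hW hQ
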